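/- Let q > 0, L₀ > 0, Tₘ₀ > 0, let γ > 0 satisfy q − L₀·γ = √π·(Tₘ₀/2 + L₀·γ²)·e^{γ²}·erf(γ), set A = (q − L₀γ)/(√π·erf γ), T(y,t) = A·(2√t·e^{−y²/(4t)} + √π·y·erf(y/(2√t))) − q·y and S(t) = 2γ√t. Then the pair (T,S) solves the Stefan problem: (1) ∂T/∂t = ∂²T/∂y² for 0 < y < S(t), t > 0; (2) −∂T/∂y (S(t),t) = L₀√t·S'(t) for t > 0; (3) T(S(t),t) = Tₘ₀√t for t > 0; (4) ∂T/∂y (0,t) = −q for t > 0; and (5) S(0) = 0. -/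

import Mathlib

/-!
`u(y,t) = 2√t e^{-y²/(4t)} + √π y erf(y/(2√t))` is a similarity solution of the heat equation:
`∂ᵧu = √π erf(y/(2√t))` and `∂ₜu = ∂ᵧ²u = e^{-y²/(4t)}/√t`. Hence `T = A u - q y` solves it too,
with flux `-q` at `y = 0`. On the front `y = 2γ√t` the similarity variable `y/(2√t)` is the
constant `γ`, so both front conditions become algebraic in `γ`: the Stefan condition is the
definition of `A`, and the temperature condition is the transcendental equation for `γ`.
-/

/-- The Gauss error function `erf x = (2/√π) ∫₀ˣ e^{-s²} ds`. -/
noncomputable def erf (x : ℝ) : ℝ :=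
  (2 / Real.sqrt Real.pi) * ∫ s in (0:ℝ)..x, Real.exp (-s ^ 2)

open Real

lemma hasDerivAt_erf (x : ℝ) : HasDerivAt erf (2 / √π * exp (-x ^ 2)) x := by
  have hc : Continuous fun s : ℝ => exp (-s ^ 2) := by fun_prop
  exact (intervalIntegral.integral_hasDerivAt_right (hc.intervalIntegrable _ _)
    (hc.stronglyMeasurableAtFilter _ _) hc.continuousAt).const_mul _

lemma erf_pos {x : ℝ} (hx : 0 < x) : 0 < erf x := by
  have hc : Continuous fun s : ℝ => exp (-s ^ 2) := by fun_prop
  exact mul_pos (by positivity) (intervalIntegral.intervalIntegral_pos_of_pos_on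
    (hc.intervalIntegrable _ _) (fun s _ => exp_pos _) hx)

lemma erf_zero : erf 0 = 0 := by simp [erf]

lemma neg_div_two_sqrt_sq {t : ℝ} (ht : 0 ≤ t) (y : ℝ) :
    -(y / (2 * √t)) ^ 2 = -y ^ 2 / (4 * t) := by
  rw [div_pow, mul_pow, sq_sqrt ht, neg_div]
  norm_num

lemma hasDerivAt_erf_div_two_sqrt {t : ℝ} (ht : 0 < t) (y : ℝ) :
    HasDerivAt (fun z => √π * erf (z / (2 * √t))) (exp (-y ^ 2 / (4 * t)) / √t) y := by
  have h := ((hasDerivAt_erf _).comp y ((hasDerivAt_id y).div_const (2 * √t))).const_mul √π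
  refine h.congr_deriv ?_
  have : 0 < √π := sqrt_pos.mpr pi_pos
  rw [neg_div_two_sqrt_sq ht.le]
  field_simp
  simp

noncomputable def heatProfile (y t : ℝ) : ℝ :=
  2 * √t * exp (-y ^ 2 / (4 * t)) + √π * y * erf (y / (2 * √t))

lemma hasDerivAt_heatProfile_space {t : ℝ} (ht : 0 < t) (y : ℝ) :
    HasDerivAt (fun z => heatProfile z t) (√π * erf (y / (2 * √t))) y := by
  have hexp : HasDerivAt (fun z => exp (-z ^ 2 / (4 * t)))
      (exp (-y ^ 2 / (4 * t)) * (-(2 * y) / (4 * t))) y := by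
    simpa using ((hasDerivAt_pow 2 y).neg.div_const (4 * t)).exp
  have herf : HasDerivAt (fun z => √π * z * erf (z / (2 * √t)))
      (√π * erf (y / (2 * √t)) + y * (exp (-y ^ 2 / (4 * t)) / √t)) y := by
    exact (((hasDerivAt_id' y).fun_mul (hasDerivAt_erf_div_two_sqrt ht y)).congr_deriv
      (by ring)).congr_of_eventuallyEq (.of_forall fun z => by ring)
  refine ((hexp.const_mul (2 * √t)).add herf).congr_deriv ?_
  have : 0 < √t := sqrt_pos.mpr ht
  field_simp
  rw [sq_sqrt ht.le]
  ring

lemma hasDerivAt_heatProfile_time {t : ℝ} (ht : 0 < t) (y : ℝ) :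
    HasDerivAt (fun τ => heatProfile y τ) (exp (-y ^ 2 / (4 * t)) / √t) t := by
  have hs : 0 < √t := sqrt_pos.mpr ht
  have hsqrt := hasDerivAt_sqrt ht.ne'
  have hexp : HasDerivAt (fun τ => exp (-y ^ 2 / (4 * τ)))
      (exp (-y ^ 2 / (4 * t)) * (y ^ 2 / (4 * t ^ 2))) t := by
    convert ((hasDerivAt_const t (-y ^ 2)).fun_div ((hasDerivAt_id' t).const_mul 4)
      (by positivity)).exp using 1
    field_simp
    ring
  have herf : HasDerivAt (fun τ => erf (y / (2 * √τ)))
      (2 / √π * exp (-y ^ 2 / (4 * t)) * (-y / (4 * t * √t))) t := by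
    refine ((hasDerivAt_erf _).comp t
      ((hasDerivAt_const t y).fun_div (hsqrt.const_mul 2) (by positivity))).congr_deriv ?_
    rw [neg_div_two_sqrt_sq ht.le]
    field_simp
    rw [sq_sqrt ht.le]
    ring
  refine (((hsqrt.const_mul 2).fun_mul hexp).add (herf.const_mul (√π * y))).congr_deriv ?_
  have : 0 < √π := sqrt_pos.mpr pi_pos
  field_simp
  rw [sq_sqrt ht.le]
  ring

lemma hasDerivAt_heatProfile_affine_space (A q : ℝ) {t : ℝ} (ht : 0 < t) (y : ℝ) :
    HasDerivAt (fun z => A * heatProfile z t - q * z) (A * (√π * erf (y / (2 * √t))) - q) y :=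
  (((hasDerivAt_heatProfile_space ht y).const_mul A).sub
    ((hasDerivAt_id' y).const_mul q)).congr_deriv (by ring)

lemma heatProfile_affine_heat_equation (A q : ℝ) {t : ℝ} (ht : 0 < t) (y : ℝ) :
    deriv (fun τ => A * heatProfile y τ - q * y) t =
      deriv (deriv fun z => A * heatProfile z t - q * z) y := by
  rw [funext fun z => (hasDerivAt_heatProfile_affine_space A q ht z).deriv,
    (((hasDerivAt_erf_div_two_sqrt ht y).const_mul A).sub_const q).deriv,
    (((hasDerivAt_heatProfile_time ht y).const_mul A).sub_const _).deriv]

lemma heatProfile_two_mul_sqrt {t : ℝ} (ht : 0 < t) (c : ℝ) :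
    heatProfile (2 * c * √t) t = 2 * √t * (exp (-c ^ 2) + √π * c * erf c) := by
  have hs : 0 < √t := sqrt_pos.mpr ht
  have hc : 2 * c * √t / (2 * √t) = c := by field_simp
  rw [heatProfile, ← neg_div_two_sqrt_sq ht.le, hc]
  ring

theorem stmt9_general (q L₀ Tm₀ γ A : ℝ)
    (hγ : 0 < γ)
    (hγeq : q - L₀ * γ =
      Real.sqrt Real.pi * (Tm₀ / 2 + L₀ * γ ^ 2) * Real.exp (γ ^ 2) * erf γ)
    (hA : A = (q - L₀ * γ) / (Real.sqrt Real.pi * erf γ))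
    (T : ℝ → ℝ → ℝ)
    (hT : ∀ y t : ℝ, T y t =
      A * (2 * Real.sqrt t * Real.exp (-y ^ 2 / (4 * t))
            + Real.sqrt Real.pi * y * erf (y / (2 * Real.sqrt t))) - q * y)
    (S : ℝ → ℝ) (hS : ∀ t : ℝ, S t = 2 * γ * Real.sqrt t) :
    (∀ y t : ℝ, 0 < t → 0 < y → y < S t →
        deriv (fun τ : ℝ => T y τ) t = deriv (deriv (fun z : ℝ => T z t)) y) ∧
    (∀ t : ℝ, 0 < t →
        -deriv (fun y : ℝ => T y t) (S t) = L₀ * Real.sqrt t * deriv S t) ∧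
    (∀ t : ℝ, 0 < t → T (S t) t = Tm₀ * Real.sqrt t) ∧
    (∀ t : ℝ, 0 < t → deriv (fun y : ℝ => T y t) 0 = -q) ∧
    S 0 = 0 := by
  have herf : √π * erf γ ≠ 0 := (mul_pos (sqrt_pos.mpr pi_pos) (erf_pos hγ)).ne'
  have hAerf : A * (√π * erf γ) = q - L₀ * γ := by rw [hA, div_mul_cancel₀ _ herf]
  have hAexp : A * exp (-γ ^ 2) = Tm₀ / 2 + L₀ * γ ^ 2 := by
    have hA' : A = (Tm₀ / 2 + L₀ * γ ^ 2) * exp (γ ^ 2) :=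
      mul_right_cancel₀ herf (by linear_combination hAerf.trans hγeq)
    rw [hA', mul_assoc, ← exp_add, add_neg_cancel, exp_zero, mul_one]
  have hTspace : ∀ t, (fun z => T z t) = fun z => A * heatProfile z t - q * z :=
    fun t => funext (hT · t)
  have hS' : ∀ {t}, 0 < t → HasDerivAt S (γ / √t) t := fun ht => by
    rw [funext hS]
    exact ((hasDerivAt_sqrt ht.ne').const_mul (2 * γ)).congr_deriv (by field_simp)
  refine ⟨fun y t ht _ _ => ?_, fun t ht => ?_, fun t ht => ?_, fun t ht => ?_, by simp [hS]⟩
  · rw [hTspace, funext (hT y)]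
    exact heatProfile_affine_heat_equation A q ht y
  · have hsγ : S t / (2 * √t) = γ := by rw [hS]; field_simp [(sqrt_pos.mpr ht).ne']
    rw [hTspace, (hasDerivAt_heatProfile_affine_space A q ht _).deriv, (hS' ht).deriv, hsγ,
      hAerf]
    field_simp [(sqrt_pos.mpr ht).ne']
    ring
  · rw [show T (S t) t = A * heatProfile (S t) t - q * S t from hT _ _, hS,
      heatProfile_two_mul_sqrt ht]
    linear_combination (2 * √t) * hAexp + (2 * γ * √t) * hAerf
  · rw [hTspace, (hasDerivAt_heatProfile_affine_space A q ht 0).deriv]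
    simp [erf_zero]

/-- The pair `(T,S)` with `T(y,t) = A(2√t e^{−y²/(4t)} + √π y erf(y/(2√t))) − q y`,
`A = (q − L₀γ)/(√π erf γ)` and `S(t) = 2γ√t` solves the Stefan problem:
(1) heat equation for `0 < y < S(t)`, `t > 0`; (2) Stefan condition;
(3) `T(S(t),t) = Tₘ₀√t`; (4) flux condition `∂T/∂y(0,t) = −q`; (5) `S(0) = 0`. -/
theorem stmt9 (q L₀ Tm₀ γ A : ℝ) (hq : 0 < q) (hL : 0 < L₀) (hTm : 0 < Tm₀)
    (hγ : 0 < γ)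
    (hγeq : q - L₀ * γ =
      Real.sqrt Real.pi * (Tm₀ / 2 + L₀ * γ ^ 2) * Real.exp (γ ^ 2) * erf γ)
    (hA : A = (q - L₀ * γ) / (Real.sqrt Real.pi * erf γ))
    (T : ℝ → ℝ → ℝ)
    (hT : ∀ y t : ℝ, T y t =
      A * (2 * Real.sqrt t * Real.exp (-y ^ 2 / (4 * t))
            + Real.sqrt Real.pi * y * erf (y / (2 * Real.sqrt t))) - q * y)
    (S : ℝ → ℝ) (hS : ∀ t : ℝ, S t = 2 * γ * Real.sqrt t) :
    (∀ y t : ℝ, 0 < t → 0 < y → y < S t →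
        deriv (fun τ : ℝ => T y τ) t = deriv (deriv (fun z : ℝ => T z t)) y) ∧
    (∀ t : ℝ, 0 < t →
        -deriv (fun y : ℝ => T y t) (S t) = L₀ * Real.sqrt t * deriv S t) ∧
    (∀ t : ℝ, 0 < t → T (S t) t = Tm₀ * Real.sqrt t) ∧
    (∀ t : ℝ, 0 < t → deriv (fun y : ℝ => T y t) 0 = -q) ∧
    S 0 = 0 :=
  stmt9_general q L₀ Tm₀ γ A hγ hγeq hA T hT S hS
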